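/- arXiv:1907.06688 — 2 statements merged into one kernel-verified Lean document; each statement's English description precedes it below -/
import Mathlib

section
/- For any graph G, the branch-depth of the graphic matroid M(G) is at most the tree-depth of G decreased by one: bd(M(G)) ≤ td(G) − 1. -/
/-! Infrastructure: rooted trees, depth-decompositions and branch-depth of matroids,
following the definitions of Kardoš, Král', Liebenau, Mach and of the paper
"Optimal matrix tree-depth and a row-invariant parameterized algorithm for
integer programming". -/

/-- A rooted tree on a (nonempty) finite vertex type `V`, given by its root and its
parent function: the parent of the root is the root itself, and from any vertex the
root is reached by iterating the parent function. -/
structure RTree (V : Type) [Fintype V] [DecidableEq V] where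
  root : V
  parent : V → V
  parent_root : parent root = root
  reach : ∀ v : V, ∃ n : ℕ, parent^[n] v = root

namespace RTree

variable {V : Type} [Fintype V] [DecidableEq V]

/-- A vertex is a leaf if it has no children. -/
def IsLeaf (T : RTree V) (v : V) : Prop :=
  ∀ u : V, T.parent u = v → u = v

/-- The non-root vertices on the path from `v` to the root of `T`; they are in bijective
correspondence with the edges of this path (each such vertex corresponds to the edge
joining it to its parent). -/
def pathEdges (T : RTree V) (v : V) : Set V :=
  {u | u ≠ T.root ∧ ∃ n : ℕ, T.parent^[n] v = u}

/-- The number of edges of the tree. -/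
def edgeCount (T : RTree V) : ℕ := Fintype.card V - 1

/-- The depth of a vertex: the number of edges on the path from the root to it. -/
noncomputable def depthV (T : RTree V) (v : V) : ℕ :=
  sInf {n : ℕ | T.parent^[n] v = T.root}

/-- The depth of the tree: the maximum number of edges on a path from the root to a leaf. -/
noncomputable def depth (T : RTree V) : ℕ :=
  Finset.univ.sup T.depthV

/-- The descendants of a vertex `u` (including `u` itself). -/
def desc (T : RTree V) (u : V) : Set V := {w | ∃ n : ℕ, T.parent^[n] w = u}

/-- The number of children of a vertex. -/
noncomputable def childCount (T : RTree V) (u : V) : ℕ :=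
  {w : V | T.parent w = u ∧ w ≠ u}.ncard

/-- A rooted tree is a rooted path if every vertex has at most one child. -/
def IsRootedPath (T : RTree V) : Prop := ∀ u : V, T.childCount u ≤ 1

/-- `a` is a strict ancestor of `v`. -/
def IsStrictAncestor (T : RTree V) (a v : V) : Prop :=
  a ≠ v ∧ ∃ n : ℕ, T.parent^[n] v = a

/-- A branch of `T` consists of a vertex `u`, exactly one child `u'` of `u` and all
descendants of `u'`; it is hence determined by the non-root vertex `u'` and denoted
here by `u'`.  Its root is `parent u'`, its vertex set is `{parent u'} ∪ desc u'`, and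
its edge number `‖S‖` is `(desc u').ncard`.  The branch determined by `u'` is primary
if its root has at least two children and every (strict) ancestor of its root has
exactly one child. -/
def IsPrimaryBranch (T : RTree V) (u' : V) : Prop :=
  u' ≠ T.root ∧ 2 ≤ T.childCount (T.parent u') ∧
    ∀ a : V, T.IsStrictAncestor a (T.parent u') → T.childCount a = 1

end RTree

/-- `(T, f)` is a depth-decomposition of the matroid on ground set `X` with rank
function `rk` and rank `r`: `f` maps elements of the matroid to leaves of `T`, the
number of edges of `T` equals the rank `r` of the matroid, and the rank of every
`X' ⊆ X` is at most the number of edges contained in the union of the paths in `T`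
from the root to the vertices `f x`, `x ∈ X'`. -/
def IsDepthDecompOn {X V : Type} [Fintype V] [DecidableEq V]
    (rk : Set X → ℕ) (r : ℕ) (T : RTree V) (f : X → V) : Prop :=
  (∀ x : X, T.IsLeaf (f x)) ∧ T.edgeCount = r ∧
    ∀ X' : Set X, rk X' ≤ (⋃ x ∈ X', T.pathEdges (f x)).ncard

/-- The branch-depth of the matroid on ground set `X` with rank function `rk` and
rank `r`: the smallest depth of a rooted tree forming a depth-decomposition. -/
noncomputable def branchDepth {X : Type} (rk : Set X → ℕ) (r : ℕ) : ℕ :=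
  sInf {d : ℕ | ∃ (nV : ℕ) (T : RTree (Fin (nV + 1))) (f : X → Fin (nV + 1)),
    IsDepthDecompOn rk r T f ∧ T.depth = d}

/-- The branch of `T` determined by the non-root vertex `u'` is at capacity: the rank
of the set `Ŝ` of matroid elements mapped by `f` to the leaves of the branch equals the
number `‖S‖` of edges of the branch plus the number of edges on the path from the root
of `T` to the root of the branch. -/
def AtCapacity {X V : Type} [Fintype V] [DecidableEq V]
    (rk : Set X → ℕ) (T : RTree V) (f : X → V) (u' : V) : Prop :=
  rk {x | f x ∈ T.desc u'} = (T.desc u').ncard + T.depthV (T.parent u')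

/-- A rooted forest on a finite vertex type `V`, given by its parent function: the roots
are the fixed points of the parent function, and iterating the parent function from any
vertex reaches a root. -/
structure RForest (V : Type) [Fintype V] [DecidableEq V] where
  parent : V → V
  reach : ∀ v : V, ∃ n : ℕ, parent (parent^[n] v) = parent^[n] v

namespace RForest

variable {V : Type} [Fintype V] [DecidableEq V]

/-- The depth of a vertex: the number of edges on the path from the root of its tree. -/
noncomputable def depthV (Fo : RForest V) (v : V) : ℕ :=
  sInf {n : ℕ | Fo.parent (Fo.parent^[n] v) = Fo.parent^[n] v}

/-- The height of a rooted forest: the maximum number of vertices on a path from a root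
to a leaf. -/
noncomputable def height (Fo : RForest V) : ℕ :=
  Finset.univ.sup fun v => Fo.depthV v + 1

/-- The closure of the rooted forest `Fo` (obtained by adding edges from each vertex to
all its descendants) contains the graph `G` as a subgraph. -/
def ClosureContains (Fo : RForest V) (G : SimpleGraph V) : Prop :=
  ∀ u v : V, G.Adj u v → (∃ n : ℕ, Fo.parent^[n] v = u) ∨ (∃ n : ℕ, Fo.parent^[n] u = v)

end RForest

/-- The tree-depth of a graph `G`: the minimum height of a rooted forest whose closure
contains `G` as a subgraph. -/
noncomputable def treeDepth {V : Type} [Fintype V] [DecidableEq V] (G : SimpleGraph V) : ℕ :=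
  sInf {h : ℕ | ∃ Fo : RForest V, Fo.ClosureContains G ∧ Fo.height = h}

/-- The rank function of the graphic matroid of a graph `G`: the ground set is the edge
set of `G` and the rank of a set of edges is the maximum size of an acyclic subset. -/
noncomputable def graphicRk {V : Type} [Fintype V] [DecidableEq V] (G : SimpleGraph V)
    (S : Set G.edgeSet) : ℕ :=
  sSup {k : ℕ | ∃ S' ⊆ S, (SimpleGraph.fromEdgeSet (Subtype.val '' S')).IsAcyclic ∧
    S'.ncard = k}

/-- The branch-depth of the graphic matroid of a graph `G`. -/
noncomputable def graphicBranchDepth {V : Type} [Fintype V] [DecidableEq V]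
    (G : SimpleGraph V) : ℕ :=
  branchDepth (graphicRk G) (graphicRk G Set.univ)

/-! Take a rooted forest `F` of height `td(G)` whose closure contains `G`. Every component `C`
of `G` has a top, its shallowest vertex, which is an ancestor of all of `C`; so the ancestor
order of `F` on `C` is a rooted tree. Identifying the tops of all components yields a rooted
tree `T` whose edges are the non-top vertices: there are `∑ (|C| - 1) = rank M(G)` of them, and
`T` has depth at most `td(G) - 1` because a non-top vertex has depth at least `1` in `F` and
`T` only moves up along `F`. Send each edge of `G` to a leaf of `T` below its lower end.
An acyclic edge set has at most as many edges as non-top vertices it covers, since each of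
its components contains at most one top, and each covered non-top vertex lies on the path of
`T` to the leaf of an edge at it. -/

open SimpleGraph

def IsAncestor {V : Type*} (p : V → V) (u v : V) : Prop := ∃ n : ℕ, p^[n] v = u

namespace IsAncestor

variable {V : Type*} {p : V → V} {u v w : V}

theorem refl (p : V → V) (v : V) : IsAncestor p v v := ⟨0, rfl⟩

theorem trans (h₁ : IsAncestor p u v) (h₂ : IsAncestor p v w) : IsAncestor p u w := by
  obtain ⟨m, rfl⟩ := h₁
  obtain ⟨n, rfl⟩ := h₂
  exact ⟨m + n, Function.iterate_add_apply p m n w⟩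

theorem total (hu : IsAncestor p u w) (hv : IsAncestor p v w) :
    IsAncestor p u v ∨ IsAncestor p v u := by
  obtain ⟨m, rfl⟩ := hu
  obtain ⟨n, rfl⟩ := hv
  rcases le_total m n with h | h
  · obtain ⟨k, rfl⟩ := Nat.exists_eq_add_of_le h
    exact Or.inr ⟨k, by rw [← Function.iterate_add_apply, add_comm]⟩
  · obtain ⟨k, rfl⟩ := Nat.exists_eq_add_of_le h
    exact Or.inl ⟨k, by rw [← Function.iterate_add_apply, add_comm]⟩

theorem of_forall_lt {root : V} (μ : V → ℕ) (hμ : ∀ v ≠ root, μ (p v) < μ v) (v : V) :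
    IsAncestor p root v := by
  induction h : μ v using Nat.strong_induction_on generalizing v with
  | _ n ih =>
    by_cases hv : v = root
    · exact hv ▸ refl p v
    · exact (ih _ (h ▸ hμ v hv) (p v) rfl).trans ⟨1, rfl⟩

end IsAncestor

namespace RForest

variable {V : Type} [Fintype V] [DecidableEq V] (Fo : RForest V)

theorem parent_iterate_depthV (v : V) :
    Fo.parent (Fo.parent^[Fo.depthV v] v) = Fo.parent^[Fo.depthV v] v :=
  Nat.sInf_mem (Fo.reach v)

theorem parent_iterate_of_depthV_le {v : V} {n : ℕ} (h : Fo.depthV v ≤ n) :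
    Fo.parent (Fo.parent^[n] v) = Fo.parent^[n] v := by
  obtain ⟨k, rfl⟩ := Nat.exists_eq_add_of_le h
  rw [add_comm, Function.iterate_add_apply,
    Function.iterate_fixed (Fo.parent_iterate_depthV v)]
  exact Fo.parent_iterate_depthV v

theorem depthV_parent_iterate_le (v : V) (m : ℕ) :
    Fo.depthV (Fo.parent^[m] v) ≤ Fo.depthV v - m := by
  apply Nat.sInf_le
  change Fo.parent (Fo.parent^[Fo.depthV v - m] (Fo.parent^[m] v)) = _
  rw [← Function.iterate_add_apply]
  exact Fo.parent_iterate_of_depthV_le (by omega)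

variable {Fo}

theorem depthV_lt_of_isAncestor {u v : V} (h : IsAncestor Fo.parent u v) (hne : u ≠ v) :
    Fo.depthV u < Fo.depthV v := by
  obtain ⟨m, rfl⟩ := h
  have hm : m ≠ 0 := by rintro rfl; exact hne rfl
  have hv : Fo.depthV v ≠ 0 := fun h0 =>
    hne (Function.iterate_fixed (by simpa [h0] using Fo.parent_iterate_depthV v) m)
  have := Fo.depthV_parent_iterate_le v m
  omega

theorem isAncestor_antisymm {u v : V} (h₁ : IsAncestor Fo.parent u v)
    (h₂ : IsAncestor Fo.parent v u) : u = v := by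
  by_contra hne
  have := depthV_lt_of_isAncestor h₁ hne
  have := depthV_lt_of_isAncestor h₂ (Ne.symm hne)
  omega

theorem isAncestor_of_depthV_le {u w v : V} (hu : IsAncestor Fo.parent u v)
    (hw : IsAncestor Fo.parent w v) (h : Fo.depthV u ≤ Fo.depthV w) :
    IsAncestor Fo.parent u w := by
  rcases hu.total hw with huw | hwu
  · exact huw
  · rcases eq_or_ne w u with rfl | hne
    · exact IsAncestor.refl _ w
    · exact absurd (depthV_lt_of_isAncestor hwu hne) (by omega)

end RForest

namespace RForest

variable (V : Type) [Fintype V]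

noncomputable def chainParent (v : V) : V :=
  (Fintype.equivFin V).symm ⟨(Fintype.equivFin V v : ℕ) - 1, by omega⟩

theorem equivFin_chainParent_iterate (n : ℕ) (v : V) :
    (Fintype.equivFin V ((chainParent V)^[n] v) : ℕ) = Fintype.equivFin V v - n := by
  induction n with
  | zero => rfl
  | succ n ih => simp [Function.iterate_succ_apply', chainParent, ih, Nat.sub_sub]

variable [DecidableEq V]

noncomputable def chain : RForest V where
  parent := chainParent V
  reach v := ⟨Fintype.equivFin V v, (Fintype.equivFin V).injective <| Fin.ext <| by
    simp [chainParent, equivFin_chainParent_iterate]⟩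

theorem chain_closureContains (G : SimpleGraph V) : (chain V).ClosureContains G := by
  have key {u v : V} (h : Fintype.equivFin V u ≤ Fintype.equivFin V v) :
      ∃ n, (chain V).parent^[n] v = u :=
    ⟨Fintype.equivFin V v - Fintype.equivFin V u, (Fintype.equivFin V).injective <| Fin.ext <| by
      rw [chain, equivFin_chainParent_iterate]
      omega⟩
  intro u v _
  rcases le_total (Fintype.equivFin V u) (Fintype.equivFin V v) with h | h
  · exact Or.inl (key h)
  · exact Or.inr (key h)

end RForest

theorem exists_closureContains_height_eq_treeDepth {V : Type} [Fintype V] [DecidableEq V]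
    (G : SimpleGraph V) : ∃ Fo : RForest V, Fo.ClosureContains G ∧ Fo.height = treeDepth G :=
  Nat.sInf_mem (s := {h | ∃ Fo : RForest V, Fo.ClosureContains G ∧ Fo.height = h})
    ⟨_, RForest.chain V, RForest.chain_closureContains V G, rfl⟩

theorem Equiv.conj_iterate_apply {V W : Type*} (e : V ≃ W) (p : V → V) (n : ℕ) (v : V) :
    (e ∘ p ∘ e.symm)^[n] (e v) = e (p^[n] v) := by
  induction n with
  | zero => rfl
  | succ n ih => simp [Function.iterate_succ_apply', ih]

namespace RTree

variable {V : Type} [Fintype V] [DecidableEq V] (T : RTree V)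

theorem parent_iterate_depthV (v : V) : T.parent^[T.depthV v] v = T.root :=
  Nat.sInf_mem (T.reach v)

theorem depthV_root : T.depthV T.root = 0 :=
  Nat.eq_zero_of_le_zero (Nat.sInf_le (show T.parent^[0] T.root = T.root from rfl))

theorem depthV_eq_depthV_parent_add_one {v : V} (hv : v ≠ T.root) :
    T.depthV v = T.depthV (T.parent v) + 1 := by
  have hpos : T.depthV v ≠ 0 := fun h0 => hv (by simpa [h0] using T.parent_iterate_depthV v)
  have hle : T.depthV (T.parent v) ≤ T.depthV v - 1 := by
    apply Nat.sInf_le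
    change T.parent^[T.depthV v - 1] (T.parent v) = T.root
    rw [← Function.iterate_succ_apply, Nat.succ_eq_add_one, Nat.sub_add_cancel
      (Nat.one_le_iff_ne_zero.mpr hpos)]
    exact T.parent_iterate_depthV v
  have hge : T.depthV v ≤ T.depthV (T.parent v) + 1 :=
    Nat.sInf_le (by
      change T.parent^[T.depthV (T.parent v) + 1] v = T.root
      rw [Function.iterate_succ_apply]
      exact T.parent_iterate_depthV (T.parent v))
  omega

theorem depthV_le_of_forall_lt (μ : V → ℕ) (hμ : ∀ v ≠ T.root, μ (T.parent v) < μ v)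
    (v : V) : T.depthV v ≤ μ v := by
  induction h : μ v using Nat.strong_induction_on generalizing v with
  | _ n ih =>
    by_cases hv : v = T.root
    · simp [hv, T.depthV_root]
    · have := ih _ (h ▸ hμ v hv) (T.parent v) rfl
      have := hμ v hv
      rw [T.depthV_eq_depthV_parent_add_one hv]
      omega

theorem exists_isLeaf_isAncestor (v : V) : ∃ l, T.IsLeaf l ∧ IsAncestor T.parent v l := by
  obtain ⟨l, hvl, hmax⟩ := Set.exists_max_image {l | IsAncestor T.parent v l} T.depthV
    (Set.toFinite _) ⟨v, IsAncestor.refl _ v⟩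
  refine ⟨l, fun u hu => ?_, hvl⟩
  by_contra hne
  have hu_root : u ≠ T.root := by
    rintro rfl
    exact hne (T.parent_root.symm.trans hu)
  have := hmax u (hvl.trans ⟨1, hu⟩)
  rw [T.depthV_eq_depthV_parent_add_one hu_root, hu] at this
  omega

section Map

variable {W : Type} [Fintype W] [DecidableEq W] (e : V ≃ W)

def map : RTree W where
  root := e T.root
  parent := e ∘ T.parent ∘ e.symm
  parent_root := by simp [T.parent_root]
  reach w := by
    obtain ⟨n, hn⟩ := T.reach (e.symm w)
    refine ⟨n, ?_⟩
    rw [← e.apply_symm_apply w, e.conj_iterate_apply, hn]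

@[simp]
theorem map_root : (T.map e).root = e T.root := rfl

theorem map_parent_iterate (n : ℕ) (v : V) :
    (T.map e).parent^[n] (e v) = e (T.parent^[n] v) :=
  e.conj_iterate_apply T.parent n v

theorem depthV_map (v : V) : (T.map e).depthV (e v) = T.depthV v := by
  simp only [depthV, map_parent_iterate]
  congr! 3 with n
  exact e.apply_eq_iff_eq

theorem depth_map_le : (T.map e).depth ≤ T.depth :=
  Finset.sup_le fun w _ => by
    rw [← e.apply_symm_apply w, depthV_map]
    exact Finset.le_sup (f := T.depthV) (Finset.mem_univ _)

theorem isLeaf_map {v : V} (hv : T.IsLeaf v) : (T.map e).IsLeaf (e v) := fun w hw => by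
  rw [← e.apply_symm_apply w] at hw ⊢
  simp only [map, Function.comp_apply, Equiv.symm_apply_apply, e.apply_eq_iff_eq] at hw
  rw [hv _ hw]

theorem pathEdges_map (v : V) : (T.map e).pathEdges (e v) = e '' T.pathEdges v := by
  ext w
  obtain ⟨u, rfl⟩ := e.surjective w
  rw [e.injective.mem_set_image]
  simp only [pathEdges, Set.mem_ofPred_eq, map_root, map_parent_iterate, ne_eq,
    e.apply_eq_iff_eq]

end Map

end RTree

theorem IsDepthDecompOn.map {X V W : Type} [Fintype V] [DecidableEq V] [Fintype W]
    [DecidableEq W] {rk : Set X → ℕ} {r : ℕ} {T : RTree V} {f : X → V}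
    (h : IsDepthDecompOn rk r T f) (e : V ≃ W) : IsDepthDecompOn rk r (T.map e) (e ∘ f) := by
  obtain ⟨hleaf, hcount, hrank⟩ := h
  refine ⟨fun x => T.isLeaf_map e (hleaf x), ?_, fun X' => ?_⟩
  · rw [← hcount]
    simp [RTree.edgeCount, Fintype.card_congr e]
  · simp only [Function.comp_apply, RTree.pathEdges_map, ← Set.image_iUnion₂,
      Set.ncard_image_of_injective _ e.injective]
    exact hrank X'

theorem branchDepth_le_depth {X V : Type} [Fintype V] [DecidableEq V] {rk : Set X → ℕ}
    {r : ℕ} {T : RTree V} {f : X → V} (h : IsDepthDecompOn rk r T f) :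
    branchDepth rk r ≤ T.depth := by
  have : Nonempty V := ⟨T.root⟩
  obtain ⟨n, hn⟩ := Nat.exists_eq_succ_of_ne_zero (Fintype.card_ne_zero (α := V))
  let e := Fintype.equivFinOfCardEq hn
  refine (Nat.sInf_le ?_).trans (T.depth_map_le e)
  exact ⟨n, T.map e, e ∘ f, h.map e, rfl⟩

namespace SimpleGraph

variable {V : Type*}

theorem ncard_edgeSet_fromEdgeSet_image_val {G : SimpleGraph V} (S : Set G.edgeSet) :
    (fromEdgeSet (Subtype.val '' S)).edgeSet.ncard = S.ncard := by
  have hdiag : Subtype.val '' S \ Sym2.diagSet = Subtype.val '' S :=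
    sdiff_eq_left.mpr (Set.disjoint_left.mpr fun _ ⟨x, _, hx⟩ hd =>
      G.not_isDiag_of_mem_edgeSet x.2 (hx ▸ hd))
  rw [edgeSet_fromEdgeSet, hdiag, Set.ncard_image_of_injective _ Subtype.val_injective]

theorem exists_insert_injOn_connectedComponentMk {H H' : SimpleGraph V} (hle : H' ≤ H)
    {R : Set V} (hR : R.InjOn H.connectedComponentMk) {u v : V} (huv : H.Reachable u v)
    (hnr : ¬H'.Reachable u v) :
    ∃ w, (w = u ∨ w = v) ∧ w ∉ R ∧ (insert w R).InjOn H'.connectedComponentMk := by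
  have hR' : R.InjOn H'.connectedComponentMk := fun a ha b hb hab =>
    hR ha hb (ConnectedComponent.eq.mpr ((ConnectedComponent.eq.mp hab).mono hle))
  suffices ∃ w, (w = u ∨ w = v) ∧ H'.connectedComponentMk w ∉ H'.connectedComponentMk '' R by
    obtain ⟨w, hw, hwR⟩ := this
    have hw_notMem : w ∉ R := fun h => hwR ⟨w, h, rfl⟩
    exact ⟨w, hw, hw_notMem, (Set.injOn_insert hw_notMem).mpr ⟨hR', hwR⟩⟩
  by_cases hu : H'.connectedComponentMk u ∈ H'.connectedComponentMk '' R
  · -- `u` and `v` lie in different `H'`-components, so only one of them can meet `R`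
    refine ⟨v, Or.inr rfl, ?_⟩
    rintro ⟨r₂, hr₂, hv⟩
    obtain ⟨r₁, hr₁, hu⟩ := hu
    have hr₁u := ConnectedComponent.eq.mp hu
    have hr₂v := ConnectedComponent.eq.mp hv
    have : r₁ = r₂ := hR hr₁ hr₂ (ConnectedComponent.eq.mpr
      (((hr₁u.mono hle).trans huv).trans (hr₂v.mono hle).symm))
    subst this
    exact hnr (hr₁u.symm.trans hr₂v)
  · exact ⟨u, Or.inl rfl, hu⟩

theorem Reachable.exists_adj_dist_lt {H : SimpleGraph V} {v r : V} (h : H.Reachable v r)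
    (hne : v ≠ r) : ∃ x, H.Adj v x ∧ H.dist x r < H.dist v r := by
  obtain ⟨p, hp⟩ := h.exists_walk_length_eq_dist
  cases p with
  | nil => exact absurd rfl hne
  | cons hadj q =>
    refine ⟨_, hadj, ?_⟩
    have := dist_le q
    rw [Walk.length_cons] at hp
    omega

variable [Finite V]

theorem IsAcyclic.ncard_edgeSet_le_ncard_support_diff {H : SimpleGraph V} (hH : H.IsAcyclic)
    {R : Set V} (hR : R.InjOn H.connectedComponentMk) :
    H.edgeSet.ncard ≤ (H.support \ R).ncard := by
  induction hn : H.edgeSet.ncard generalizing H R with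
  | zero => exact Nat.zero_le _
  | succ n ih =>
    obtain ⟨e, he⟩ := Set.nonempty_of_ncard_ne_zero (s := H.edgeSet) (by omega)
    induction e using Sym2.ind with | _ u v => ?_
    -- delete the bridge `s(u, v)` and add to `R` an end whose new component misses `R`
    let H' := H.deleteEdges {s(u, v)}
    have hle : H' ≤ H := H.deleteEdges_le _
    have hnr : ¬H'.Reachable u v := isAcyclic_iff_forall_isBridge.mp hH he
    obtain ⟨w, huv, hwR, hR'⟩ :=
      exists_insert_injOn_connectedComponentMk hle hR (H.mem_edgeSet.mp he).reachable hnr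
    have hcard : H'.edgeSet.ncard = n := by
      rw [edgeSet_deleteEdges, Set.ncard_sdiff_singleton_of_mem he]
      omega
    have hw : w ∈ H.support := by
      rcases huv with rfl | rfl
      · exact ⟨v, H.mem_edgeSet.mp he⟩
      · exact ⟨u, (H.mem_edgeSet.mp he).symm⟩
    have hsub : insert w (H'.support \ insert w R) ⊆ H.support \ R := by
      rintro x (rfl | ⟨hx, hxR⟩)
      · exact ⟨hw, hwR⟩
      · exact ⟨support_mono hle hx, fun h => hxR (Set.mem_insert_of_mem w h)⟩
    calc n + 1 ≤ (H'.support \ insert w R).ncard + 1 :=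
          Nat.add_le_add_right (ih (hH.anti hle) hR' hcard) 1
      _ = (insert w (H'.support \ insert w R)).ncard :=
          (Set.ncard_insert_of_notMem (fun h => h.2 (Set.mem_insert w R))).symm
      _ ≤ (H.support \ R).ncard := Set.ncard_le_ncard hsub

theorem ncard_compl_le_ncard_edgeSet (H : SimpleGraph V) {R : Set V}
    (hinj : R.InjOn H.connectedComponentMk) (hsurj : ∀ v, ∃ r ∈ R, H.Reachable v r) :
    Rᶜ.ncard ≤ H.edgeSet.ncard := by
  choose rep hrep_mem hrep using hsurj
  have hrep_eq {v w : V} (h : H.Reachable v w) : rep v = rep w :=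
    hinj (hrep_mem v) (hrep_mem w)
      (ConnectedComponent.eq.mpr (((hrep v).symm.trans h).trans (hrep w)))
  -- each `v ∉ R` is sent to the first edge of a shortest path to its representative
  have hnext (v : V) (hv : v ∈ Rᶜ) : ∃ x, H.Adj v x ∧ H.dist x (rep v) < H.dist v (rep v) :=
    (hrep v).exists_adj_dist_lt fun h => hv (h ▸ hrep_mem v)
  choose! next hnext_adj hnext_lt using hnext
  refine Set.ncard_le_ncard_of_injOn (fun v => s(v, next v)) (fun v hv => hnext_adj v hv)
    (fun v₁ hv₁ v₂ hv₂ heq => ?_) (Set.toFinite _)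
  rcases Sym2.eq_iff.mp heq with ⟨h, -⟩ | ⟨h₁, h₂⟩
  · exact h
  · have hr := hrep_eq (hnext_adj v₁ hv₁).reachable
    have h₁' := hnext_lt v₁ hv₁
    have h₂' := hnext_lt v₂ hv₂
    rw [h₂] at hr h₁'
    rw [← h₁, ← hr] at h₂'
    omega

end SimpleGraph

namespace RForest

variable {V : Type} [Fintype V] [DecidableEq V] (Fo : RForest V) (G : SimpleGraph V)

def IsComponentTop (t : V) : Prop :=
  ∀ u, IsAncestor Fo.parent u t → G.Reachable t u → u = t

def nonTops : Set V := {v | ¬Fo.IsComponentTop G v}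

noncomputable instance : Fintype (Fo.nonTops G) := Fintype.ofFinite _

variable {Fo G}

theorem exists_isComponentTop_reachable (v : V) :
    ∃ t, Fo.IsComponentTop G t ∧ G.Reachable v t := by
  obtain ⟨t, ⟨htv, hvt⟩, hmin⟩ := Set.exists_min_image
    {u | IsAncestor Fo.parent u v ∧ G.Reachable v u} Fo.depthV (Set.toFinite _)
    ⟨v, IsAncestor.refl _ v, Reachable.refl v⟩
  refine ⟨t, fun u hut htu => ?_, hvt⟩
  by_contra hne
  have := hmin u ⟨hut.trans htv, hvt.trans htu⟩
  have := depthV_lt_of_isAncestor hut hne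
  omega

theorem IsComponentTop.isAncestor_of_reachable (hclo : Fo.ClosureContains G) {t w : V}
    (ht : Fo.IsComponentTop G t) (h : G.Reachable t w) : IsAncestor Fo.parent t w := by
  rw [reachable_iff_reflTransGen] at h
  induction h with
  | refl => exact IsAncestor.refl _ t
  | @tail b c htb hbc ih =>
    rcases hclo b c hbc with hcb | hbc'
    · exact ih.trans hcb
    · rcases ih.total hbc' with htc | hct
      · exact htc
      · have htc : G.Reachable t c :=
          ((reachable_iff_reflTransGen t b).mpr htb).trans hbc.reachable
        rw [ht c hct htc]
        exact IsAncestor.refl _ t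

theorem injOn_connectedComponentMk_isComponentTop (hclo : Fo.ClosureContains G) :
    {t | Fo.IsComponentTop G t}.InjOn G.connectedComponentMk := fun t₁ h₁ t₂ h₂ h => by
  have h := ConnectedComponent.eq.mp h
  exact isAncestor_antisymm (IsComponentTop.isAncestor_of_reachable hclo h₁ h)
    (IsComponentTop.isAncestor_of_reachable hclo h₂ h.symm)

theorem depthV_pos_of_mem_nonTops {v : V} (hv : v ∈ Fo.nonTops G) : 0 < Fo.depthV v := by
  simp only [nonTops, IsComponentTop, not_forall] at hv
  obtain ⟨u, hu, -, hne⟩ := hv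
  exact Nat.zero_lt_of_lt (depthV_lt_of_isAncestor hu hne)

variable (Fo G)

def reachableAncestors (v : Fo.nonTops G) : Set (Fo.nonTops G) :=
  {u | u ≠ v ∧ IsAncestor Fo.parent u v ∧ G.Reachable v u}

open scoped Classical in
noncomputable def mergedParent : Option (Fo.nonTops G) → Option (Fo.nonTops G)
  | none => none
  | some v =>
    if h : (Fo.reachableAncestors G v).Nonempty then
      some (Set.exists_max_image _ (fun u : Fo.nonTops G => Fo.depthV u) (Set.toFinite _) h).choose
    else none

noncomputable def mergedDepth : Option (Fo.nonTops G) → ℕ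
  | none => 0
  | some v => Fo.depthV v

variable {Fo G}

theorem mergedParent_eq_some {v u : Fo.nonTops G} (h : Fo.mergedParent G (some v) = some u) :
    u ∈ Fo.reachableAncestors G v ∧
      ∀ w ∈ Fo.reachableAncestors G v, Fo.depthV w ≤ Fo.depthV u := by
  simp only [mergedParent] at h
  split_ifs at h with hne
  cases h
  exact (Set.exists_max_image _ (fun u : Fo.nonTops G => Fo.depthV u) (Set.toFinite _)
    hne).choose_spec

theorem mergedParent_eq_none {v : Fo.nonTops G} (h : Fo.mergedParent G (some v) = none) :
    Fo.reachableAncestors G v = ∅ := by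
  simp only [mergedParent] at h
  split_ifs at h with hne
  exact Set.not_nonempty_iff_eq_empty.mp hne

theorem mergedDepth_mergedParent_lt {x : Option (Fo.nonTops G)} (hx : x ≠ none) :
    Fo.mergedDepth G (Fo.mergedParent G x) < Fo.mergedDepth G x := by
  obtain ⟨v, rfl⟩ := Option.ne_none_iff_exists'.mp hx
  rcases hp : Fo.mergedParent G (some v) with _ | u
  · exact depthV_pos_of_mem_nonTops v.2
  · obtain ⟨⟨hne, hanc, -⟩, -⟩ := mergedParent_eq_some hp
    exact depthV_lt_of_isAncestor hanc (Subtype.coe_ne_coe.mpr hne)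

variable (Fo G)

/-- The root `none` stands for the tops of all the components of `G`, identified. -/
noncomputable def mergedTree : RTree (Option (Fo.nonTops G)) where
  root := none
  parent := Fo.mergedParent G
  parent_root := rfl
  reach := IsAncestor.of_forall_lt (Fo.mergedDepth G) fun _ => mergedDepth_mergedParent_lt

theorem depth_mergedTree_le : (Fo.mergedTree G).depth ≤ Fo.height - 1 := by
  refine Finset.sup_le fun x _ => ((Fo.mergedTree G).depthV_le_of_forall_lt (Fo.mergedDepth G)
    (fun _ => mergedDepth_mergedParent_lt) x).trans ?_
  rcases x with _ | v
  · exact Nat.zero_le _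
  · have : Fo.depthV v + 1 ≤ Fo.height :=
      Finset.le_sup (f := fun v => Fo.depthV v + 1) (Finset.mem_univ (v : V))
    exact Nat.le_sub_one_of_lt this

theorem edgeCount_mergedTree : (Fo.mergedTree G).edgeCount = (Fo.nonTops G).ncard := by
  rw [RTree.edgeCount, Fintype.card_option, Nat.add_sub_cancel, ← Nat.card_eq_fintype_card,
    Nat.card_coe_set_eq]

variable {Fo G}

theorem isAncestor_mergedTree {w z : Fo.nonTops G} (hwz : IsAncestor Fo.parent w z)
    (hzw : G.Reachable z w) : IsAncestor (Fo.mergedTree G).parent (some w) (some z) := by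
  induction hd : Fo.depthV z using Nat.strong_induction_on generalizing z with
  | _ n ih =>
    rcases eq_or_ne w z with rfl | hne
    · exact IsAncestor.refl _ _
    have hw : w ∈ Fo.reachableAncestors G z := ⟨hne, hwz, hzw⟩
    rcases hp : Fo.mergedParent G (some z) with _ | u
    · rw [mergedParent_eq_none hp] at hw
      exact absurd hw (Set.notMem_empty w)
    · obtain ⟨⟨hne_u, huz, hzu⟩, hmax⟩ := mergedParent_eq_some hp
      have hlt := depthV_lt_of_isAncestor huz (Subtype.coe_ne_coe.mpr hne_u)
      have hwu := isAncestor_of_depthV_le hwz huz (hmax w hw)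
      exact (ih _ (hd ▸ hlt) hwu (hzu.symm.trans hzw) rfl).trans ⟨1, hp⟩

end RForest

section GraphicRank

variable {V : Type} [Fintype V] [DecidableEq V] {G : SimpleGraph V}

theorem graphicRk_le {X' : Set G.edgeSet} {m : ℕ}
    (h : ∀ S ⊆ X', (fromEdgeSet (Subtype.val '' S)).IsAcyclic → S.ncard ≤ m) :
    graphicRk G X' ≤ m :=
  csSup_le' fun _ ⟨S, hS, hac, hk⟩ => hk ▸ h S hS hac

theorem ncard_edgeSet_le_graphicRk {F : SimpleGraph V} (hle : F ≤ G) (hF : F.IsAcyclic) :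
    F.edgeSet.ncard ≤ graphicRk G Set.univ := by
  let S : Set G.edgeSet := Subtype.val ⁻¹' F.edgeSet
  have hS : Subtype.val '' S = F.edgeSet := by
    rw [Subtype.image_preimage_coe, Set.inter_eq_right.mpr (edgeSet_mono hle)]
  have hbdd : BddAbove {k | ∃ S' ⊆ (Set.univ : Set G.edgeSet),
      (fromEdgeSet (Subtype.val '' S')).IsAcyclic ∧ S'.ncard = k} :=
    ⟨Nat.card G.edgeSet, fun _ ⟨S', _, _, hk⟩ => hk ▸ Set.ncard_le_card S'⟩
  refine le_csSup hbdd ⟨S, Set.subset_univ S, by rwa [hS, fromEdgeSet_edgeSet], ?_⟩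
  rw [← hS, Set.ncard_image_of_injective _ Subtype.val_injective]

end GraphicRank

namespace RForest

variable {V : Type} [Fintype V] [DecidableEq V] {Fo : RForest V} {G : SimpleGraph V}

theorem ncard_le_ncard_nonTops_incident (hclo : Fo.ClosureContains G) (S : Set G.edgeSet)
    (hS : (fromEdgeSet (Subtype.val '' S)).IsAcyclic) :
    S.ncard ≤ {w : Fo.nonTops G | ∃ x ∈ S, (w : V) ∈ (x : Sym2 V)}.ncard := by
  set H := fromEdgeSet (Subtype.val '' S)
  have hHG : H ≤ G := fun a b hab => by
    obtain ⟨⟨x, -, hx⟩, -⟩ := (fromEdgeSet_adj _).mp hab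
    exact G.mem_edgeSet.mp (hx ▸ x.2)
  have hinj : {t | Fo.IsComponentTop G t}.InjOn H.connectedComponentMk := fun a ha b hb hab =>
    injOn_connectedComponentMk_isComponentTop hclo ha hb
      (ConnectedComponent.eq.mpr ((ConnectedComponent.eq.mp hab).mono hHG))
  have hsub : H.support \ {t | Fo.IsComponentTop G t} ⊆
      Subtype.val '' {w : Fo.nonTops G | ∃ x ∈ S, (w : V) ∈ (x : Sym2 V)} := by
    rintro w ⟨⟨z, hwz⟩, hw⟩
    obtain ⟨⟨x, hx, hxwz⟩, -⟩ := (fromEdgeSet_adj _).mp hwz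
    exact ⟨⟨w, hw⟩, ⟨x, hx, hxwz ▸ Sym2.mem_mk_left w z⟩, rfl⟩
  calc S.ncard = H.edgeSet.ncard := (ncard_edgeSet_fromEdgeSet_image_val S).symm
    _ ≤ (H.support \ {t | Fo.IsComponentTop G t}).ncard :=
      hS.ncard_edgeSet_le_ncard_support_diff hinj
    _ ≤ _ := Set.ncard_le_ncard hsub
    _ = _ := Set.ncard_image_of_injective _ Subtype.val_injective

theorem ncard_nonTops_eq_graphicRk (hclo : Fo.ClosureContains G) :
    (Fo.nonTops G).ncard = graphicRk G Set.univ := by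
  apply le_antisymm
  · obtain ⟨F, hFG, hF, hF_reach⟩ := G.exists_isAcyclic_reachable_eq_le
    calc (Fo.nonTops G).ncard = {t | Fo.IsComponentTop G t}ᶜ.ncard := rfl
      _ ≤ F.edgeSet.ncard := F.ncard_compl_le_ncard_edgeSet
          (fun a ha b hb hab => injOn_connectedComponentMk_isComponentTop hclo ha hb
            (ConnectedComponent.eq.mpr (hF_reach ▸ ConnectedComponent.eq.mp hab)))
          (fun v => (exists_isComponentTop_reachable v).imp fun _ ht => ⟨ht.1, hF_reach ▸ ht.2⟩)
      _ ≤ graphicRk G Set.univ := ncard_edgeSet_le_graphicRk hFG hF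
  · refine graphicRk_le fun S _ hS => (ncard_le_ncard_nonTops_incident hclo S hS).trans ?_
    rw [← Nat.card_coe_set_eq]
    exact Set.ncard_le_card _

theorem exists_leafMap (hclo : Fo.ClosureContains G) :
    ∃ f : G.edgeSet → Option (Fo.nonTops G), (∀ x, (Fo.mergedTree G).IsLeaf (f x)) ∧
      ∀ (x : G.edgeSet) (w : Fo.nonTops G), (w : V) ∈ (x : Sym2 V) →
        IsAncestor (Fo.mergedTree G).parent (some w) (f x) := by
  have key (x : G.edgeSet) : ∃ l, (Fo.mergedTree G).IsLeaf l ∧ ∀ w : Fo.nonTops G,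
      (w : V) ∈ (x : Sym2 V) → IsAncestor (Fo.mergedTree G).parent (some w) l := by
    obtain ⟨a, b, hx, hab, hanc⟩ : ∃ a b, (x : Sym2 V) = s(a, b) ∧ G.Adj a b ∧
        IsAncestor Fo.parent a b := by
      obtain ⟨e, he⟩ := x
      induction e using Sym2.ind with
      | _ a b =>
        rcases hclo a b (G.mem_edgeSet.mp he) with h | h
        · exact ⟨a, b, rfl, G.mem_edgeSet.mp he, h⟩
        · exact ⟨b, a, Sym2.eq_swap, (G.mem_edgeSet.mp he).symm, h⟩
    have hb : b ∈ Fo.nonTops G := fun htop => hab.ne (htop a hanc hab.symm.reachable)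
    obtain ⟨l, hl, hbl⟩ := (Fo.mergedTree G).exists_isLeaf_isAncestor (some ⟨b, hb⟩)
    have hb_low : ∀ w ∈ s(a, b), IsAncestor Fo.parent w b ∧ G.Reachable b w := by
      rintro w hw
      rcases Sym2.mem_iff.mp hw with rfl | rfl
      exacts [⟨hanc, hab.symm.reachable⟩, ⟨IsAncestor.refl _ w, Reachable.refl w⟩]
    refine ⟨l, hl, fun w hw => ?_⟩
    obtain ⟨hwb, hbw⟩ := hb_low w (hx ▸ hw)
    exact (isAncestor_mergedTree (z := ⟨b, hb⟩) hwb hbw).trans hbl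
  choose f hf using key
  exact ⟨f, fun x => (hf x).1, fun x => (hf x).2⟩

theorem exists_isDepthDecompOn_mergedTree (hclo : Fo.ClosureContains G) :
    ∃ f, IsDepthDecompOn (graphicRk G) (graphicRk G Set.univ) (Fo.mergedTree G) f := by
  obtain ⟨f, hleaf, hf⟩ := exists_leafMap hclo
  refine ⟨f, hleaf, (edgeCount_mergedTree Fo G).trans (ncard_nonTops_eq_graphicRk hclo),
    fun X' => graphicRk_le fun S hSX hS => (ncard_le_ncard_nonTops_incident hclo S hS).trans ?_⟩
  refine Set.ncard_le_ncard_of_injOn some ?_ (Option.some_injective _).injOn (Set.toFinite _)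
  rintro w ⟨x, hx, hwx⟩
  exact Set.mem_biUnion (hSX hx) ⟨Option.some_ne_none w, hf x w hwx⟩

end RForest

/-- Proposition: `bd(M(G)) ≤ td(G) - 1`. For any graph `G`, the
branch-depth of the graphic matroid `M(G)` is at most the tree-depth of `G` decreased
by one. -/
theorem graphic_branchDepth_le_treeDepth_sub_one (V : Type) [Fintype V] [DecidableEq V]
    (G : SimpleGraph V) :
    graphicBranchDepth G ≤ treeDepth G - 1 := by
  classical
  obtain ⟨Fo, hclo, hheight⟩ := exists_closureContains_height_eq_treeDepth G
  obtain ⟨f, hf⟩ := Fo.exists_isDepthDecompOn_mergedTree hclo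
  calc graphicBranchDepth G ≤ (Fo.mergedTree G).depth := branchDepth_le_depth hf
    _ ≤ Fo.height - 1 := Fo.depth_mergedTree_le G
    _ = treeDepth G - 1 := by rw [hheight]
end

section
/- Let A be an m×n matrix of rank m over a field, let M be the vector matroid formed by the columns of A, and let (T, f, g) be an extended depth-decomposition of M with Im(g) = {w_1, ..., w_m}. Let A' be the (unique) m×n matrix satisfying that the j-th column x_j of A equals Σ_{i=1}^m A'_{ij} w_i for every j. Then for every column index j and every row index i with A'_{ij} ≠ 0, the vector w_i equals g(v) for some non-root vertex v on the path in T from f(x_j) to the root; in particular, every column of A' has at most depth(T) nonzero entries. -/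
/-- The rank function of the vector matroid formed by the family of vectors `v`:
the rank of a subset is the dimension of its linear hull. -/
noncomputable def vecRk (F : Type) {W ι : Type} [Field F] [AddCommGroup W] [Module F W]
    (v : ι → W) (S : Set ι) : ℕ :=
  Module.finrank F (Submodule.span F (v '' S))

/-- `(T, f, g)` is an extended depth-decomposition of the vector matroid formed by the
family of vectors `v`: `(T, f)` is a depth-decomposition, the images under `g` of the
non-root vertices of `T` form a basis of the linear hull of the vectors, and every
vector `v x` lies in the linear hull of the `g`-image of the non-root vertices on the
path from `f x` to the root. -/
def IsExtDepthDecomp (F : Type) {W ι V : Type} [Field F] [AddCommGroup W] [Module F W]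
    [Fintype V] [DecidableEq V] (v : ι → W) (T : RTree V) (f : ι → V) (g : V → W) : Prop :=
  IsDepthDecompOn (vecRk F v) (vecRk F v Set.univ) T f ∧
  LinearIndependent F (fun u : {u : V // u ≠ T.root} => g u.val) ∧
  Submodule.span F (g '' {u : V | u ≠ T.root}) = Submodule.span F (Set.range v) ∧
  ∀ x : ι, v x ∈ Submodule.span F (g '' T.pathEdges (f x))

/-! Since `A` has rank `m`, the `m` vectors `w i` span `F^m` and hence form a basis. Column `j`
of `A` lies in the span of the basis vectors `g u`, `u` on the path from `f j` to the root,
so its coordinates `A' · j` in that basis vanish outside these vectors; and the path has at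
most `depth T` non-root vertices. -/

namespace RTree

variable {V : Type} [Fintype V] [DecidableEq V]

theorem iterate_parent_depthV (T : RTree V) (v : V) : T.parent^[T.depthV v] v = T.root :=
  Nat.sInf_mem (T.reach v)

theorem pathEdges_subset_image_Iio_depthV (T : RTree V) (v : V) :
    T.pathEdges v ⊆ (T.parent^[·] v) '' Set.Iio (T.depthV v) := by
  rintro u ⟨hu, k, rfl⟩
  refine ⟨k, Set.mem_Iio.2 (not_le.1 fun hk => hu ?_), rfl⟩
  rw [← Nat.sub_add_cancel hk, Function.iterate_add_apply, T.iterate_parent_depthV,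
    Function.iterate_fixed T.parent_root]

theorem ncard_pathEdges_le_depthV (T : RTree V) (v : V) :
    (T.pathEdges v).ncard ≤ T.depthV v :=
  calc (T.pathEdges v).ncard
      ≤ ((T.parent^[·] v) '' Set.Iio (T.depthV v)).ncard :=
        Set.ncard_le_ncard (T.pathEdges_subset_image_Iio_depthV v) ((Set.finite_Iio _).image _)
    _ ≤ (Set.Iio (T.depthV v)).ncard := Set.ncard_image_le (Set.finite_Iio _)
    _ = T.depthV v := by simp

theorem depthV_le_depth (T : RTree V) (v : V) : T.depthV v ≤ T.depth :=
  Finset.le_sup (Finset.mem_univ v)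

theorem ncard_pathEdges_le_depth (T : RTree V) (v : V) : (T.pathEdges v).ncard ≤ T.depth :=
  (T.ncard_pathEdges_le_depthV v).trans (T.depthV_le_depth v)

end RTree

theorem Matrix.span_col_eq_top_of_rank_eq {K m n : Type*} [Field K] [Fintype m] [Fintype n]
    (A : Matrix m n K) (hA : A.rank = Fintype.card m) :
    Submodule.span K (Set.range A.col) = ⊤ :=
  Submodule.eq_top_of_finrank_eq (by rw [← A.rank_eq_finrank_span_cols, hA, Module.finrank_pi])

theorem LinearIndependent.mem_of_sum_smul_mem_span_image {ι R M : Type*} [Fintype ι]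
    [Semiring R] [AddCommMonoid M] [Module R M] {w : ι → M} (hw : LinearIndependent R w)
    {c : ι → R} {s : Set ι} (hc : ∑ i, c i • w i ∈ Submodule.span R (w '' s)) {i : ι}
    (hi : c i ≠ 0) : i ∈ s := by
  obtain ⟨l, hl, hsum⟩ := (Finsupp.mem_span_image_iff_linearCombination R).1 hc
  have hl_eq : l = Finsupp.equivFunOnFinite.symm c :=
    hw (by rw [hsum, Finsupp.linearCombination_apply, Finsupp.sum_fintype] <;> simp)
  exact hl (by simpa [hl_eq] using hi)

/-- support of the columns after a change of basis along an extended
depth-decomposition. Let `A` be an `m × n` matrix of rank `m` over a field, let `M` be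
the vector matroid formed by the columns of `A`, let `(T, f, g)` be an extended
depth-decomposition of `M` with `Im(g) = {w 0, …, w (m-1)}`, and let `A'` be the matrix
expressing each column of `A` in the basis `w`.  Then for every column index `j` and
row index `i` with `A' i j ≠ 0`, the vector `w i` equals `g u` for some non-root vertex
`u` on the path in `T` from `f j` to the root; in particular every column of `A'` has
at most `depth T` non-zero entries. -/
theorem support_of_column_in_basis (F : Type) [Field F] (m n : ℕ)
    (A : Matrix (Fin m) (Fin n) F) (hA : A.rank = m)
    {V : Type} [Fintype V] [DecidableEq V]
    (T : RTree V) (f : Fin n → V) (g : V → (Fin m → F))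
    (hext : IsExtDepthDecomp F (fun j => A.transpose j) T f g)
    (w : Fin m → (Fin m → F)) (hw : g '' {u : V | u ≠ T.root} = Set.range w)
    (A' : Matrix (Fin m) (Fin n) F)
    (hA' : ∀ j : Fin n, (fun i => A i j) = ∑ i : Fin m, A' i j • w i) :
    (∀ j : Fin n, ∀ i : Fin m, A' i j ≠ 0 →
      ∃ u ∈ T.pathEdges (f j), g u = w i) ∧
    ∀ j : Fin n, {i : Fin m | A' i j ≠ 0}.ncard ≤ T.depth := by
  obtain ⟨-, -, hspan, hmem⟩ := hext
  have hw_span : Submodule.span F (Set.range w) = ⊤ := by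
    rw [← hw, hspan]
    exact A.span_col_eq_top_of_rank_eq (by simpa using hA)
  have hw_li : LinearIndependent F w :=
    linearIndependent_of_top_le_span_of_card_eq_finrank hw_span.ge (by simp)
  have hpath : ∀ j, g '' T.pathEdges (f j) ⊆ Set.range w := fun j =>
    hw ▸ Set.image_mono fun _ hu => hu.1
  have hsupport : ∀ j i, A' i j ≠ 0 → w i ∈ g '' T.pathEdges (f j) := by
    intro j i hi
    have hcol : ∑ i, A' i j • w i ∈
        Submodule.span F (w '' (w ⁻¹' (g '' T.pathEdges (f j)))) := by
      rw [Set.image_preimage_eq_of_subset (hpath j), ← hA' j]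
      exact hmem j
    exact hw_li.mem_of_sum_smul_mem_span_image hcol hi
  refine ⟨hsupport, fun j => ?_⟩
  calc {i | A' i j ≠ 0}.ncard
      ≤ (w ⁻¹' (g '' T.pathEdges (f j))).ncard := Set.ncard_le_ncard (hsupport j)
    _ = (g '' T.pathEdges (f j)).ncard :=
        Set.ncard_preimage_of_injective_subset_range hw_li.injective (hpath j)
    _ ≤ (T.pathEdges (f j)).ncard := Set.ncard_image_le (Set.toFinite _)
    _ ≤ T.depth := T.ncard_pathEdges_le_depth (f j)
end
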